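/- Let S be a set and define an equivalence on formal ℤ-linear combinations of subsets of a fixed finite set D generated by [B] + [C] = [B∪C] + [B∩C] for all B, C ⊆ D, with [∅] = 0. Then the resulting quotient group is free abelian on the singletons: the map sending a subset to the sum of its elements, ℤ⟨𝒫(D)⟩/∼ → ℤ⟨D⟩, [B] ↦ Σ_{x∈B} [x], is a group isomorphism. -/

import Mathlib

open FreeAbelianGroup

/-- Let `D` be a finite set. Quotient the free abelian group on the subsets of `D`
by the relations `[∅] = 0` and `[B ∪ C] + [B ∩ C] = [B] + [C]` for all `B, C ⊆ D`.
Then the map `[B] ↦ Σ_{x ∈ B} [x]` to the free abelian group on `D` kills the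
relations and induces an isomorphism from the quotient. -/
theorem stmt18 {D : Type} [Fintype D] [DecidableEq D] :
    let N : AddSubgroup (FreeAbelianGroup (Finset D)) :=
      AddSubgroup.closure
        ({FreeAbelianGroup.of (∅ : Finset D)} ∪
          {r | ∃ B C : Finset D,
            r = FreeAbelianGroup.of (B ∪ C) + FreeAbelianGroup.of (B ∩ C)
              - FreeAbelianGroup.of B - FreeAbelianGroup.of C})
    let φ : FreeAbelianGroup (Finset D) →+ FreeAbelianGroup D :=
      FreeAbelianGroup.lift (fun B : Finset D => ∑ x ∈ B, FreeAbelianGroup.of x)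
    ∃ h : ∀ r ∈ N, φ r = 0,
      Function.Bijective (QuotientAddGroup.lift N φ h) := by
  intro N φ
  have key : ∀ r ∈ N, φ r = 0 := by
    intro r hr
    induction hr using AddSubgroup.closure_induction with
    | mem r hr =>
      rcases hr with hr | ⟨B, C, rfl⟩
      · simp only [Set.mem_singleton_iff] at hr
        subst hr
        simp [φ]
      · simp only [φ, map_add, map_sub, lift_apply_of]
        rw [Finset.sum_union_inter]
        abel
    | zero => simp
    | add x y _ _ hx hy => simp [hx, hy]
    | neg x _ hx => simp [hx]
  refine ⟨key, ?_⟩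
  set F := QuotientAddGroup.lift N φ key with hF
  set ψ : FreeAbelianGroup D →+ FreeAbelianGroup (Finset D) ⧸ N :=
    FreeAbelianGroup.lift (fun x : D => QuotientAddGroup.mk' N (of ({x} : Finset D))) with hψ
  -- in the quotient, [B] equals the sum of its singletons
  have empty0 : (QuotientAddGroup.mk' N) (of (∅ : Finset D)) = 0 := by
    rw [QuotientAddGroup.mk'_apply, QuotientAddGroup.eq_zero_iff]
    exact AddSubgroup.subset_closure (Or.inl rfl)
  have rel : ∀ B C : Finset D,
      (QuotientAddGroup.mk' N) (of (B ∪ C)) + (QuotientAddGroup.mk' N) (of (B ∩ C))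
        = (QuotientAddGroup.mk' N) (of B) + (QuotientAddGroup.mk' N) (of C) := by
    intro B C
    have : (QuotientAddGroup.mk' N) (of (B ∪ C) + of (B ∩ C) - of B - of C) = 0 := by
      rw [QuotientAddGroup.mk'_apply, QuotientAddGroup.eq_zero_iff]
      exact AddSubgroup.subset_closure (Or.inr ⟨B, C, rfl⟩)
    simp only [map_add, map_sub] at this
    linear_combination (norm := abel) this
  have sum_singletons : ∀ B : Finset D,
      ∑ x ∈ B, (QuotientAddGroup.mk' N) (of ({x} : Finset D))
        = (QuotientAddGroup.mk' N) (of B) := by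
    intro B
    induction B using Finset.induction_on with
    | empty => simpa using empty0.symm
    | @insert a B ha ih =>
      rw [Finset.sum_insert ha, ih]
      have h1 : ({a} : Finset D) ∪ B = insert a B := by
        ext x; simp [or_comm]
      have h2 : ({a} : Finset D) ∩ B = ∅ := by
        ext x; simp; rintro rfl; exact ha
      have := rel {a} B
      rw [h1, h2, empty0, add_zero] at this
      exact this.symm
  have hFψ : ∀ y : FreeAbelianGroup D, F (ψ y) = y := by
    have : F.comp ψ = AddMonoidHom.id _ := by
      ext x
      simp [hψ, hF, φ, lift_apply_of, QuotientAddGroup.lift_mk]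
      exact (by simp [φ, lift_apply_of] : φ (of ({x} : Finset D)) = of x)
    intro y
    exact DFunLike.congr_fun this y
  have hψF : ∀ q : FreeAbelianGroup (Finset D) ⧸ N, ψ (F q) = q := by
    have : ψ.comp F = AddMonoidHom.id _ := by
      rw [← AddMonoidHom.cancel_right (QuotientAddGroup.mk'_surjective N)]
      ext B
      simp only [AddMonoidHom.comp_apply, AddMonoidHom.id_apply, hF,
        QuotientAddGroup.mk'_apply, QuotientAddGroup.lift_mk', QuotientAddGroup.lift_mk]
      change ψ (φ (of B)) = _
      simp only [φ, lift_apply_of, map_sum, hψ]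
      simpa using sum_singletons B
    intro q
    exact DFunLike.congr_fun this q
  exact Function.bijective_iff_has_inverse.mpr ⟨ψ, hψF, hFψ⟩
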